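/- arXiv:1509.08787 — 2 statements merged into one kernel-verified Lean document; each statement's English description precedes it below -/
import Mathlib

section
/- (Factorization under independence, d = 2 case) Suppose the tempered density factorizes: π_t(x₁,x₂) = π_t(x₁)π_t(x₂) with π_t(x_i) = π₀(x_i)L_i(x_i)^{λ(t)}/Z_i(t), and choose g₁(x₁,t) = F_t(x₁) = ∫_{−∞}^{x₁} π_t(u₁) du₁. Then the velocity field of the Knothe–Rosenblatt-type flow reduces to f_i(x,t) = λ'(t)( ∫_{−∞}^{x_i} (I_t^{(i)} − log L_i(u_i)) π_t(u_i) du_i ) / π_t(x_i) for i = 1, 2, where I_t^{(i)} = ∫ log L_i(u)π_t(u) du; i.e., each component depends only on x_i and solves the corresponding one-dimensional flow transport problem. -/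
/-!
Because the tempered density is a product, each coordinate's time derivative `∂ₜπₜ(xᵢ)` is a
centred score `λ'(t)(log Lᵢ − Iₜ⁽ⁱ⁾)πₜ`, which integrates to zero over ℝ. Integrating the product
rule `∂ₜ(π(x₁)π(x₂))` over `x₁` therefore leaves only `∂ₜπₜ(x₂)`, and over a half line `Iic x₁` it
leaves `(∫_{Iic x₁} ∂ₜπₜ) π(x₂) + Fₜ(x₁) ∂ₜπₜ(x₂)`. Substituting these into the
Knothe–Rosenblatt velocity field, the `x₂`-terms cancel and the one-dimensional fields remain.
-/

open MeasureTheory Set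

section CenteredScore

variable {α : Type*} [MeasurableSpace α] (μ : Measure α)

theorem integral_mul_const_add_mul_const {a b : α → ℝ} (ha : Integrable a μ)
    (hb : Integrable b μ) (x y : ℝ) :
    ∫ u, (a u * x + b u * y) ∂μ = (∫ u, a u ∂μ) * x + (∫ u, b u ∂μ) * y := by
  rw [integral_add (ha.mul_const x) (hb.mul_const y), integral_mul_const, integral_mul_const]

theorem integral_const_mul_sub_mul_eq_neg (c I : ℝ) (g p : α → ℝ) :
    ∫ u, c * (g u - I) * p u ∂μ = -(c * ∫ u, (I - g u) * p u ∂μ) := by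
  rw [← integral_const_mul, ← integral_neg]
  congr 1 with u
  ring

theorem integral_centered_score_eq_zero {g p : α → ℝ} (hp : Integrable p μ)
    (hgp : Integrable (fun u => g u * p u) μ) (hprob : ∫ u, p u ∂μ = 1) (c : ℝ) :
    ∫ u, c * (g u - ∫ v, g v * p v ∂μ) * p u ∂μ = 0 := by
  have hsplit : (fun u => c * (g u - ∫ v, g v * p v ∂μ) * p u)
      = fun u => c * (g u * p u) - (c * ∫ v, g v * p v ∂μ) * p u := by
    funext u; ring
  rw [hsplit, integral_sub (hgp.const_mul c) (hp.const_mul _), integral_const_mul,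
    integral_const_mul, hprob]
  ring

end CenteredScore

theorem kr_flow_factorizes_d2_general (p dp : Fin 2 → ℝ → ℝ → ℝ) (L : Fin 2 → ℝ → ℝ)
    (lam' : ℝ → ℝ) (I : Fin 2 → ℝ → ℝ)
    (hppos : ∀ i t u, 0 < p i t u)
    (hprob : ∀ i t, ∫ u, p i t u = 1)
    (hpint : ∀ i t, Integrable (p i t))
    (hlogint : ∀ i t, Integrable (fun u => Real.log (L i u) * p i t u))
    (hdpint : ∀ i t, Integrable (dp i t))
    (hI : ∀ i t, I i t = ∫ u, Real.log (L i u) * p i t u)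
    (hdp : ∀ i t u, dp i t u = lam' t * (Real.log (L i u) - I i t) * p i t u)
    (F : ℝ → ℝ → ℝ)
    (hF : ∀ t x₁, F t x₁ = ∫ u in Iic x₁, p 0 t u) :
    ∀ (t x₁ x₂ : ℝ),
      (-((∫ u in Iic x₁, (dp 0 t u * p 1 t x₂ + p 0 t u * dp 1 t x₂))
            - F t x₁ * (∫ u, (dp 0 t u * p 1 t x₂ + p 0 t u * dp 1 t x₂)))
          / (p 0 t x₁ * p 1 t x₂)
        = lam' t * (∫ u in Iic x₁, (I 0 t - Real.log (L 0 u)) * p 0 t u) / p 0 t x₁)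
      ∧
      (-(p 0 t x₁ *
            (∫ u₂ in Iic x₂, ∫ u₁ : ℝ, (dp 0 t u₁ * p 1 t u₂ + p 0 t u₁ * dp 1 t u₂)))
          / (p 0 t x₁ * p 1 t x₂)
        = lam' t * (∫ u in Iic x₂, (I 1 t - Real.log (L 1 u)) * p 1 t u) / p 1 t x₂) := by
  intro t x₁ x₂
  have hdp_fun : ∀ i, dp i t = fun u => lam' t * (Real.log (L i u) - I i t) * p i t u :=
    fun i => funext (hdp i t)
  have hdp_Iic : ∀ i x, ∫ u in Iic x, dp i t u
      = -(lam' t * ∫ u in Iic x, (I i t - Real.log (L i u)) * p i t u) := fun i x => by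
    rw [hdp_fun, integral_const_mul_sub_mul_eq_neg]
  have hdp_total : ∫ u, dp 0 t u = 0 := by
    rw [hdp_fun, hI, integral_centered_score_eq_zero _ (hpint 0 t) (hlogint 0 t) (hprob 0 t)]
  have hmarginal : ∀ y, ∫ u, (dp 0 t u * p 1 t y + p 0 t u * dp 1 t y) = dp 1 t y := fun y => by
    rw [integral_mul_const_add_mul_const _ (hdpint 0 t) (hpint 0 t), hdp_total, hprob]
    ring
  have hpartial : ∫ u in Iic x₁, (dp 0 t u * p 1 t x₂ + p 0 t u * dp 1 t x₂)
      = (∫ u in Iic x₁, dp 0 t u) * p 1 t x₂ + F t x₁ * dp 1 t x₂ := by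
    rw [integral_mul_const_add_mul_const _ (hdpint 0 t).integrableOn (hpint 0 t).integrableOn, hF]
  have hp₁ := (hppos 0 t x₁).ne'
  have hp₂ := (hppos 1 t x₂).ne'
  constructor
  · rw [hpartial, hmarginal, hdp_Iic]
    field_simp
    ring
  · simp only [hmarginal, hdp_Iic]
    field_simp

/-- Factorization under independence (`d = 2`): when the tempered density
factorizes as `π_t(x₁,x₂) = π_t(x₁)π_t(x₂)` and `g₁ = F_t`, the
Knothe–Rosenblatt-type velocity field reduces componentwise to the
one-dimensional velocity fields
`f_i(x,t) = λ'(t)(∫_{−∞}^{x_i} (I_t^{(i)} − log L_i(u)) π_t(u) du)/π_t(x_i)`. -/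
theorem kr_flow_factorizes_d2 (p dp : Fin 2 → ℝ → ℝ → ℝ) (L : Fin 2 → ℝ → ℝ)
    (lam' : ℝ → ℝ) (I : Fin 2 → ℝ → ℝ)
    (hppos : ∀ i t u, 0 < p i t u)
    (hLpos : ∀ i u, 0 < L i u)
    (hprob : ∀ i t, ∫ u, p i t u = 1)
    (hpint : ∀ i t, Integrable (p i t))
    (hlogint : ∀ i t, Integrable (fun u => Real.log (L i u) * p i t u))
    (hdpint : ∀ i t, Integrable (dp i t))
    (hI : ∀ i t, I i t = ∫ u, Real.log (L i u) * p i t u)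
    (hdp : ∀ i t u, dp i t u = lam' t * (Real.log (L i u) - I i t) * p i t u)
    (F : ℝ → ℝ → ℝ)
    (hF : ∀ t x₁, F t x₁ = ∫ u in Iic x₁, p 0 t u) :
    ∀ (t x₁ x₂ : ℝ),
      (-((∫ u in Iic x₁, (dp 0 t u * p 1 t x₂ + p 0 t u * dp 1 t x₂))
            - F t x₁ * (∫ u, (dp 0 t u * p 1 t x₂ + p 0 t u * dp 1 t x₂)))
          / (p 0 t x₁ * p 1 t x₂)
        = lam' t * (∫ u in Iic x₁, (I 0 t - Real.log (L 0 u)) * p 0 t u) / p 0 t x₁)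
      ∧
      (-(p 0 t x₁ *
            (∫ u₂ in Iic x₂, ∫ u₁ : ℝ, (dp 0 t u₁ * p 1 t u₂ + p 0 t u₁ * dp 1 t u₂)))
          / (p 0 t x₁ * p 1 t x₂)
        = lam' t * (∫ u in Iic x₂, (I 1 t - Real.log (L 1 u)) * p 1 t u) / p 1 t x₂) :=
  kr_flow_factorizes_d2_general p dp L lam' I hppos hprob hpint hlogint hdpint hI hdp F hF
end

section
/- (Truncated Gaussian Gibbs flow solves the conditional Liouville equation) With the truncated curve as above, the velocity field f̃_i(x,t) = ( α_i'(t) π₀(α_i(t), x_{−i}) ∫_{x_i}^{β_i(t)} π₀(u_i, x_{−i}) du_i + β_i'(t) π₀(β_i(t), x_{−i}) ∫_{α_i(t)}^{x_i} π₀(u_i, x_{−i}) du_i ) / ( π₀(x) ∫_{α_i(t)}^{β_i(t)} π₀(u_i, x_{−i}) du_i ) satisfies ∂_{x_i}( π_t(x_i|x_{−i}) f̃_i(x,t) ) = −∂_t π_t(x_i|x_{−i}) for all x in the interior of the support of π_t and t ∈ (0,1). -/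
/-!
Along the line `s ↦ update x i s`, the density `π₀` cancels between the conditional density
`π_t(s | x_{-i})` and the velocity `f̃_i`, so their product is `1 / Z²` times an affine
combination of `∫_s^β π₀` and `∫_α^s π₀`, with `Z` the normalising constant. By the
fundamental theorem of calculus its derivative at `x_i` is `(β' π₀(β) − α' π₀(α)) π₀(x) / Z²`,
which is `−∂ₜ π_t(x_i | x_{-i})`.
-/

open MeasureTheory Set

section SetIntegralIoo

variable {E : Type*} [NormedAddCommGroup E] [NormedSpace ℝ E] [CompleteSpace E]
  {g : ℝ → E} {a b x : ℝ}

theorem hasDerivAt_setIntegral_Ioo_left (hg : Continuous g) (hxb : x < b) :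
    HasDerivAt (fun s => ∫ u in Ioo s b, g u) (-g x) x := by
  have hFTC : HasDerivAt (fun s => ∫ u in s..b, g u) (-g x) x :=
    intervalIntegral.integral_hasDerivAt_left (hg.intervalIntegrable _ _)
      (hg.stronglyMeasurableAtFilter _ _) hg.continuousAt
  refine hFTC.congr_of_eventuallyEq ?_
  filter_upwards [Iio_mem_nhds hxb] with s hs
  rw [intervalIntegral.integral_of_le (le_of_lt hs), integral_Ioc_eq_integral_Ioo]

theorem hasDerivAt_setIntegral_Ioo_right (hg : Continuous g) (hax : a < x) :
    HasDerivAt (fun s => ∫ u in Ioo a s, g u) (g x) x := by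
  have hFTC : HasDerivAt (fun s => ∫ u in a..s, g u) (g x) x :=
    intervalIntegral.integral_hasDerivAt_right (hg.intervalIntegrable _ _)
      (hg.stronglyMeasurableAtFilter _ _) hg.continuousAt
  refine hFTC.congr_of_eventuallyEq ?_
  filter_upwards [Ioi_mem_nhds hax] with s hs
  rw [intervalIntegral.integral_of_le (le_of_lt hs), integral_Ioc_eq_integral_Ioo]

end SetIntegralIoo

theorem truncated_gibbs_flow_conditional_liouville_general (d : ℕ) (π₀ : (Fin d → ℝ) → ℝ)
    (hπ₀pos : ∀ x, 0 < π₀ x) (hπ₀C1 : ContDiff ℝ 1 π₀)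
    (α β : Fin d → ℝ → ℝ)
    (f : Fin d → (Fin d → ℝ) → ℝ → ℝ)
    (hf : ∀ (i : Fin d) (x : Fin d → ℝ) (t : ℝ), f i x t =
      (deriv (α i) t * π₀ (Function.update x i (α i t)) *
          (∫ u in Ioo (x i) (β i t), π₀ (Function.update x i u))
        + deriv (β i) t * π₀ (Function.update x i (β i t)) *
          (∫ u in Ioo (α i t) (x i), π₀ (Function.update x i u)))
        / (π₀ x * ∫ u in Ioo (α i t) (β i t), π₀ (Function.update x i u))) :
    ∀ (i : Fin d) (x : Fin d → ℝ), ∀ t ∈ Ioo (0:ℝ) 1,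
      (∀ j, x j ∈ Ioo (α j t) (β j t)) →
      HasDerivAt
        (fun s =>
          (π₀ (Function.update x i s) /
              ∫ u in Ioo (α i t) (β i t), π₀ (Function.update x i u)) *
            f i (Function.update x i s) t)
        (-((deriv (α i) t *
              (π₀ (Function.update x i (α i t)) /
                ∫ u in Ioo (α i t) (β i t), π₀ (Function.update x i u))
            - deriv (β i) t *
              (π₀ (Function.update x i (β i t)) /
                ∫ u in Ioo (α i t) (β i t), π₀ (Function.update x i u))) *
            (π₀ x / ∫ u in Ioo (α i t) (β i t), π₀ (Function.update x i u))))
        (x i) := by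
  intro i x t _ hx
  set g : ℝ → ℝ := fun u => π₀ (Function.update x i u)
  set Z := ∫ u in Ioo (α i t) (β i t), g u
  set c₁ := deriv (α i) t * g (α i t)
  set c₂ := deriv (β i) t * g (β i t)
  have hg : Continuous g := hπ₀C1.continuous.comp (continuous_const.update i continuous_id)
  have hgx : g (x i) = π₀ x := by simp [g]
  have hflux : (fun s => g s / Z * f i (Function.update x i s) t) =
      fun s => (c₁ * (∫ u in Ioo s (β i t), g u) + c₂ * ∫ u in Ioo (α i t) s, g u) / (Z * Z) := by
    funext s
    have hgs : g s ≠ 0 := (hπ₀pos _).ne'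
    rw [hf]
    simp only [Function.update_idem, Function.update_self]
    change g s / Z * ((c₁ * (∫ u in Ioo s (β i t), g u) + c₂ * ∫ u in Ioo (α i t) s, g u) /
      (g s * Z)) = _
    field_simp
  have hderiv := (((hasDerivAt_setIntegral_Ioo_left hg (hx i).2).const_mul c₁).add
    ((hasDerivAt_setIntegral_Ioo_right hg (hx i).1).const_mul c₂)).div_const (Z * Z)
  rw [hflux]
  refine hderiv.congr_deriv ?_
  rw [← hgx]
  ring

/-- The truncated-Gaussian Gibbs velocity field solves the conditional
Liouville equation `∂_{x_i}(π_t(x_i|x_{−i}) f̃_i(x,t)) = −∂ₜ π_t(x_i|x_{−i})`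
in the interior of the support. -/
theorem truncated_gibbs_flow_conditional_liouville (d : ℕ) (π₀ : (Fin d → ℝ) → ℝ)
    (hπ₀pos : ∀ x, 0 < π₀ x) (hπ₀C1 : ContDiff ℝ 1 π₀)
    (α β : Fin d → ℝ → ℝ)
    (hα : ∀ i, Differentiable ℝ (α i)) (hβ : ∀ i, Differentiable ℝ (β i))
    (hαmono : ∀ i, Monotone (α i)) (hβmono : ∀ i, Antitone (β i))
    (hαβ : ∀ i t, α i t < β i t)
    (f : Fin d → (Fin d → ℝ) → ℝ → ℝ)
    (hf : ∀ (i : Fin d) (x : Fin d → ℝ) (t : ℝ), f i x t =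
      (deriv (α i) t * π₀ (Function.update x i (α i t)) *
          (∫ u in Ioo (x i) (β i t), π₀ (Function.update x i u))
        + deriv (β i) t * π₀ (Function.update x i (β i t)) *
          (∫ u in Ioo (α i t) (x i), π₀ (Function.update x i u)))
        / (π₀ x * ∫ u in Ioo (α i t) (β i t), π₀ (Function.update x i u))) :
    ∀ (i : Fin d) (x : Fin d → ℝ), ∀ t ∈ Ioo (0:ℝ) 1,
      (∀ j, x j ∈ Ioo (α j t) (β j t)) →
      HasDerivAt
        (fun s =>
          (π₀ (Function.update x i s) /
              ∫ u in Ioo (α i t) (β i t), π₀ (Function.update x i u)) *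
            f i (Function.update x i s) t)
        (-((deriv (α i) t *
              (π₀ (Function.update x i (α i t)) /
                ∫ u in Ioo (α i t) (β i t), π₀ (Function.update x i u))
            - deriv (β i) t *
              (π₀ (Function.update x i (β i t)) /
                ∫ u in Ioo (α i t) (β i t), π₀ (Function.update x i u))) *
            (π₀ x / ∫ u in Ioo (α i t) (β i t), π₀ (Function.update x i u))))
        (x i) :=
  truncated_gibbs_flow_conditional_liouville_general d π₀ hπ₀pos hπ₀C1 α β f hf
end
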